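/- (Hardy–Littlewood rearrangement lower bound) Let X be a random variable and μ a probability distribution on ℝ. Then inf over all random variables Y with distribution μ of E[XY] equals ∫_0^1 Q_X(p) Q_μ(1−p) dp, provided the integrals are well-defined, and the infimum is attained by any Y ~ μ anti-comonotonic with X. -/

import Mathlib

open MeasureTheory Set Filter Topology

/-- Right-continuous quantile function of a random variable `X` under `P`. -/
noncomputable def quantile {Ω : Type*} [MeasurableSpace Ω] (P : Measure Ω) (X : Ω → ℝ)
    (p : ℝ) : ℝ :=
  sInf {z : ℝ | p < (P {ω | X ω ≤ z}).toReal}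

/-- Quantile function of a probability distribution `μ` on `ℝ`. -/
noncomputable def quantileM (μ : Measure ℝ) (p : ℝ) : ℝ := quantile μ id p

/-- `X` and `Y` are comonotonic: `(X(ω)−X(ω'))·(Y(ω)−Y(ω')) ≥ 0` for a.e. pair. -/
def Comonotone {Ω : Type*} [MeasurableSpace Ω] (P : Measure Ω) (X Y : Ω → ℝ) : Prop :=
  ∀ᵐ ω ∂P, ∀ᵐ ω' ∂P, 0 ≤ (X ω - X ω') * (Y ω - Y ω')

/-!
With `layer x s = 1{s < x} - 1{s < -x}` one has `x = ∫₀^∞ layer x s ds`, so by Fubini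
`E[XY]` is the integral over `s, t > 0` of `E[layer X s · layer Y t]`, a signed sum of the four
probabilities `P(±X > s, ±Y > t)`. The Fréchet bounds `max (a + b - 1) 0 ≤ P(A ∩ B) ≤ min a b`
bound this integrand below by a function of the laws of `X` and `Y` alone, and all four bounds
are attained when `X` and `Y` are anti-comonotone, since then for upper level sets `A` of `X`
and `B` of `Y` either `A ∩ B` or `Aᶜ ∩ Bᶜ` is null. Under the uniform law on `(0, 1)` the pair
`(Q_X(p), Q_μ(1 - p))` is anti-comonotone with marginals `law X` and `μ`, so
`∫₀¹ Q_X(p) Q_μ(1 - p) dp` is exactly the integral of the lower bound.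
-/

noncomputable def layer (x s : ℝ) : ℝ := (Iio x).indicator 1 s - (Iio (-x)).indicator 1 s

lemma measurable_layer : Measurable fun q : ℝ × ℝ => layer q.1 q.2 := by
  simp only [layer, indicator_apply, mem_Iio, Pi.one_apply]
  exact (Measurable.ite (measurableSet_lt measurable_snd measurable_fst) measurable_const
    measurable_const).sub (Measurable.ite (measurableSet_lt measurable_snd measurable_fst.neg)
    measurable_const measurable_const)

lemma layer_eq_indicator (x s : ℝ) :
    layer x s = (Ioi s).indicator 1 x - (Iio (-s)).indicator 1 x := by
  simp only [layer, indicator_apply, mem_Iio, mem_Ioi, Pi.one_apply, lt_neg]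

lemma integrableOn_Ioi_indicator_Iio (c : ℝ) :
    IntegrableOn ((Iio c).indicator (1 : ℝ → ℝ)) (Ioi 0) := by
  rw [IntegrableOn, integrable_indicator_iff measurableSet_Iio]
  refine (integrableOn_const_iff (by simp)).2 (Or.inr ?_)
  rw [Measure.restrict_apply measurableSet_Iio, Iio_inter_Ioi]
  exact measure_Ioo_lt_top

lemma setIntegral_Ioi_indicator_Iio (c : ℝ) :
    ∫ s in Ioi 0, (Iio c).indicator 1 s = max c 0 := by
  rw [integral_indicator_one measurableSet_Iio, measureReal_restrict_apply measurableSet_Iio,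
    Iio_inter_Ioi, Real.volume_real_Ioo, sub_zero]

lemma integrableOn_layer (x : ℝ) : IntegrableOn (layer x) (Ioi 0) :=
  (integrableOn_Ioi_indicator_Iio x).sub (integrableOn_Ioi_indicator_Iio (-x))

lemma setIntegral_Ioi_layer (x : ℝ) : ∫ s in Ioi 0, layer x s = x := by
  simp only [layer]
  rw [integral_sub (integrableOn_Ioi_indicator_Iio x) (integrableOn_Ioi_indicator_Iio (-x)),
    setIntegral_Ioi_indicator_Iio, setIntegral_Ioi_indicator_Iio, max_zero_sub_eq_self]

lemma abs_layer {s : ℝ} (hs : 0 < s) (x : ℝ) : |layer x s| = (Iio |x|).indicator 1 s := by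
  simp only [layer, indicator_apply, mem_Iio, Pi.one_apply, lt_abs]
  by_cases h₁ : s < x <;> by_cases h₂ : s < -x <;> simp [h₁, h₂]
  linarith

lemma setIntegral_Ioi_abs_layer (x : ℝ) : ∫ s in Ioi 0, |layer x s| = |x| := by
  rw [setIntegral_congr_fun measurableSet_Ioi fun s hs => abs_layer hs x,
    setIntegral_Ioi_indicator_Iio, max_eq_left (abs_nonneg x)]

section Hoeffding

variable {Ω : Type*} [MeasurableSpace Ω] {P : Measure Ω} {X Y : Ω → ℝ}

noncomputable def layerMoment (P : Measure Ω) (X Y : Ω → ℝ) (z : ℝ × ℝ) : ℝ :=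
  ∫ ω, layer (X ω) z.1 * layer (Y ω) z.2 ∂P

lemma integral_prod_layer_mul_layer (x y : ℝ) :
    ∫ z, layer x z.1 * layer y z.2 ∂((volume.restrict (Ioi 0)).prod (volume.restrict (Ioi 0)))
      = x * y := by
  rw [integral_prod_mul, setIntegral_Ioi_layer, setIntegral_Ioi_layer]

lemma integrable_layer_mul_layer [SFinite P] (hX : Measurable X) (hY : Measurable Y)
    (hXY : Integrable (fun ω => X ω * Y ω) P) :
    Integrable (fun q : (ℝ × ℝ) × Ω => layer (X q.2) q.1.1 * layer (Y q.2) q.1.2)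
      (((volume.restrict (Ioi 0)).prod (volume.restrict (Ioi 0))).prod P) := by
  have hmX : Measurable fun q : (ℝ × ℝ) × Ω => layer (X q.2) q.1.1 :=
    measurable_layer.comp (f := fun q : (ℝ × ℝ) × Ω => (X q.2, q.1.1))
      ((hX.comp measurable_snd).prodMk (measurable_fst.comp measurable_fst))
  have hmY : Measurable fun q : (ℝ × ℝ) × Ω => layer (Y q.2) q.1.2 :=
    measurable_layer.comp (f := fun q : (ℝ × ℝ) × Ω => (Y q.2, q.1.2))
      ((hY.comp measurable_snd).prodMk (measurable_snd.comp measurable_fst))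
  have hm : Measurable fun q : (ℝ × ℝ) × Ω => layer (X q.2) q.1.1 * layer (Y q.2) q.1.2 :=
    hmX.mul hmY
  refine (integrable_prod_iff' hm.aestronglyMeasurable).2
    ⟨.of_forall fun ω => (integrableOn_layer (X ω)).mul_prod (integrableOn_layer (Y ω)), ?_⟩
  have hnorm : ∀ ω, ∫ z, ‖layer (X ω) z.1 * layer (Y ω) z.2‖
      ∂((volume.restrict (Ioi 0)).prod (volume.restrict (Ioi 0))) = ‖X ω * Y ω‖ := fun ω => by
    simp only [norm_mul, Real.norm_eq_abs]
    rw [integral_prod_mul (f := fun s => |layer (X ω) s|) (g := fun t => |layer (Y ω) t|),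
      setIntegral_Ioi_abs_layer, setIntegral_Ioi_abs_layer]
  simp only [hnorm]
  exact hXY.norm

lemma integral_mul_eq_integral_layerMoment [SFinite P] (hX : Measurable X) (hY : Measurable Y)
    (hXY : Integrable (fun ω => X ω * Y ω) P) :
    ∫ ω, X ω * Y ω ∂P =
      ∫ z, layerMoment P X Y z ∂((volume.restrict (Ioi 0)).prod (volume.restrict (Ioi 0))) := by
  calc ∫ ω, X ω * Y ω ∂P
      = ∫ ω, ∫ z, layer (X ω) z.1 * layer (Y ω) z.2
          ∂((volume.restrict (Ioi 0)).prod (volume.restrict (Ioi 0))) ∂P := by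
        simp only [integral_prod_layer_mul_layer]
    _ = _ := integral_integral_swap (integrable_layer_mul_layer hX hY hXY).swap

lemma integrable_layerMoment [SFinite P] (hX : Measurable X) (hY : Measurable Y)
    (hXY : Integrable (fun ω => X ω * Y ω) P) :
    Integrable (layerMoment P X Y) ((volume.restrict (Ioi 0)).prod (volume.restrict (Ioi 0))) :=
  (integrable_layer_mul_layer hX hY hXY).integral_prod_left

lemma integral_indicator_sub_mul_indicator_sub [IsFiniteMeasure P] {A A' B B' : Set Ω}
    (hA : MeasurableSet A) (hA' : MeasurableSet A') (hB : MeasurableSet B)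
    (hB' : MeasurableSet B') :
    ∫ ω, (A.indicator 1 ω - A'.indicator 1 ω) * (B.indicator 1 ω - B'.indicator 1 ω) ∂P =
      P.real (A ∩ B) - P.real (A ∩ B') - P.real (A' ∩ B) + P.real (A' ∩ B') := by
  have hint : ∀ {S : Set Ω}, MeasurableSet S → Integrable (S.indicator (1 : Ω → ℝ)) P :=
    fun hS => (integrable_const 1).indicator hS
  have hexp : ∀ ω, (A.indicator 1 ω - A'.indicator 1 ω) * (B.indicator 1 ω - B'.indicator 1 ω) =
      (A ∩ B).indicator (1 : Ω → ℝ) ω - (A ∩ B').indicator 1 ω - (A' ∩ B).indicator 1 ω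
        + (A' ∩ B').indicator 1 ω := fun ω => by
    simp only [inter_indicator_one, Pi.mul_apply]
    ring
  rw [integral_congr_ae (.of_forall hexp), integral_add _ (hint (hA'.inter hB')),
    integral_sub _ (hint (hA'.inter hB)), integral_sub (hint (hA.inter hB)) (hint (hA.inter hB')),
    integral_indicator_one (hA.inter hB), integral_indicator_one (hA.inter hB'),
    integral_indicator_one (hA'.inter hB), integral_indicator_one (hA'.inter hB')]
  · exact (hint (hA.inter hB)).sub (hint (hA.inter hB'))
  · exact ((hint (hA.inter hB)).sub (hint (hA.inter hB'))).sub (hint (hA'.inter hB))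

lemma layerMoment_eq [IsFiniteMeasure P] (hX : Measurable X) (hY : Measurable Y) (z : ℝ × ℝ) :
    layerMoment P X Y z =
      P.real (X ⁻¹' Ioi z.1 ∩ Y ⁻¹' Ioi z.2) - P.real (X ⁻¹' Ioi z.1 ∩ Y ⁻¹' Iio (-z.2))
        - P.real (X ⁻¹' Iio (-z.1) ∩ Y ⁻¹' Ioi z.2)
        + P.real (X ⁻¹' Iio (-z.1) ∩ Y ⁻¹' Iio (-z.2)) := by
  simp only [layerMoment, layer_eq_indicator]
  exact integral_indicator_sub_mul_indicator_sub (hX measurableSet_Ioi) (hX measurableSet_Iio)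
    (hY measurableSet_Ioi) (hY measurableSet_Iio)

end Hoeffding

section Frechet

variable {Ω : Type*} [MeasurableSpace Ω] {μ : Measure Ω} [IsProbabilityMeasure μ] {s t : Set Ω}

lemma max_add_sub_one_le_measureReal_inter (ht : MeasurableSet t) :
    max (μ.real s + μ.real t - 1) 0 ≤ μ.real (s ∩ t) := by
  have := measureReal_union_add_inter (μ := μ) (s := s) ht
  have : μ.real (s ∪ t) ≤ 1 := measureReal_le_one
  exact max_le (by linarith) measureReal_nonneg

lemma measureReal_inter_le_min : μ.real (s ∩ t) ≤ min (μ.real s) (μ.real t) :=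
  le_min (measureReal_mono inter_subset_left) (measureReal_mono inter_subset_right)

lemma measureReal_inter_eq_max (hs : MeasurableSet s) (ht : MeasurableSet t)
    (h : μ (s ∩ t) = 0 ∨ μ (sᶜ ∩ tᶜ) = 0) :
    μ.real (s ∩ t) = max (μ.real s + μ.real t - 1) 0 := by
  have hunion := measureReal_union_add_inter (μ := μ) (s := s) ht
  have hcompl : μ.real (sᶜ ∩ tᶜ) = 1 - μ.real (s ∪ t) := by
    rw [← compl_union, probReal_compl_eq_one_sub (hs.union ht)]
  rcases h with h | h
  · have h0 : μ.real (s ∩ t) = 0 := (measureReal_eq_zero_iff (μ := μ)).2 h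
    have : μ.real (s ∪ t) ≤ 1 := measureReal_le_one
    rw [h0, max_eq_right (by linarith)]
  · have h0 : μ.real (sᶜ ∩ tᶜ) = 0 := (measureReal_eq_zero_iff (μ := μ)).2 h
    rw [max_eq_left (by linarith [measureReal_nonneg (μ := μ) (s := s ∩ t)])]
    linarith

lemma measureReal_inter_eq_min (hs : MeasurableSet s) (ht : MeasurableSet t)
    (h : μ (s \ t) = 0 ∨ μ (t \ s) = 0) :
    μ.real (s ∩ t) = min (μ.real s) (μ.real t) := by
  have hs' := measureReal_inter_add_sdiff (μ := μ) (s := s) ht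
  have ht' := measureReal_inter_add_sdiff (μ := μ) (s := t) hs
  rw [inter_comm] at ht'
  rcases h with h | h
  · rw [(measureReal_eq_zero_iff (μ := μ)).2 h] at hs'
    rw [min_eq_left (by linarith [measureReal_nonneg (μ := μ) (s := t \ s)])]
    linarith
  · rw [(measureReal_eq_zero_iff (μ := μ)).2 h] at ht'
    rw [min_eq_right (by linarith [measureReal_nonneg (μ := μ) (s := s \ t)])]
    linarith

end Frechet

section AntiComonotone

variable {Ω : Type*} [MeasurableSpace Ω] {P : Measure Ω} {X Y : Ω → ℝ}

lemma measure_eq_zero_or_of_comonotone_neg (hcom : Comonotone P X fun ω => -Y ω)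
    {C D : Set Ω} (hCD : ∀ ω ∈ C, ∀ ω' ∈ D, X ω' < X ω ∧ Y ω' < Y ω) : P C = 0 ∨ P D = 0 := by
  refine or_iff_not_imp_left.2 fun hC => measure_eq_zero_iff_ae_notMem.2 ?_
  obtain ⟨ω, hω, hωC⟩ := (hcom.and_frequently (frequently_ae_mem_iff.2 hC)).exists
  filter_upwards [hω] with ω' hω' hω'D
  obtain ⟨hx, hy⟩ := hCD ω hωC ω' hω'D
  nlinarith [mul_pos (sub_pos.2 hx) (sub_pos.2 hy)]

lemma comonotone_restrict_of_monotoneOn {α : Type*} [MeasurableSpace α] [LinearOrder α]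
    {μ : Measure α} {s : Set α} {f g : α → ℝ} (hs : MeasurableSet s) (hf : MonotoneOn f s)
    (hg : MonotoneOn g s) : Comonotone (μ.restrict s) f g :=
  ae_restrict_of_forall_mem hs fun p hp => ae_restrict_of_forall_mem hs fun q hq => by
    rcases le_total p q with hpq | hqp
    · exact mul_nonneg_of_nonpos_of_nonpos (sub_nonpos.2 (hf hp hq hpq))
        (sub_nonpos.2 (hg hp hq hpq))
    · exact mul_nonneg (sub_nonneg.2 (hf hq hp hqp)) (sub_nonneg.2 (hg hq hp hqp))

end AntiComonotone

/-- The four terms of `layerMoment_eq` replaced by their Fréchet bounds, written with the laws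
`ν` of `X` and `ρ` of `Y`. -/
noncomputable def frechetLower (ν ρ : Measure ℝ) (z : ℝ × ℝ) : ℝ :=
  max (ν.real (Ioi z.1) + ρ.real (Ioi z.2) - 1) 0 - min (ν.real (Ioi z.1)) (ρ.real (Iio (-z.2)))
    - min (ν.real (Iio (-z.1))) (ρ.real (Ioi z.2))
    + max (ν.real (Iio (-z.1)) + ρ.real (Iio (-z.2)) - 1) 0

section LayerMomentBounds

variable {Ω : Type*} [MeasurableSpace Ω] {P : Measure Ω} {X Y : Ω → ℝ}

lemma frechetLower_map (hX : Measurable X) (hY : Measurable Y) (z : ℝ × ℝ) :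
    frechetLower (P.map X) (P.map Y) z =
      max (P.real (X ⁻¹' Ioi z.1) + P.real (Y ⁻¹' Ioi z.2) - 1) 0
        - min (P.real (X ⁻¹' Ioi z.1)) (P.real (Y ⁻¹' Iio (-z.2)))
        - min (P.real (X ⁻¹' Iio (-z.1))) (P.real (Y ⁻¹' Ioi z.2))
        + max (P.real (X ⁻¹' Iio (-z.1)) + P.real (Y ⁻¹' Iio (-z.2)) - 1) 0 := by
  simp only [frechetLower, map_measureReal_apply hX measurableSet_Ioi,
    map_measureReal_apply hX measurableSet_Iio, map_measureReal_apply hY measurableSet_Ioi,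
    map_measureReal_apply hY measurableSet_Iio]

lemma frechetLower_map_le_layerMoment [IsProbabilityMeasure P] (hX : Measurable X)
    (hY : Measurable Y) (z : ℝ × ℝ) :
    frechetLower (P.map X) (P.map Y) z ≤ layerMoment P X Y z := by
  rw [frechetLower_map hX hY, layerMoment_eq hX hY]
  have := max_add_sub_one_le_measureReal_inter (μ := P) (s := X ⁻¹' Ioi z.1)
    (hY (measurableSet_Ioi (a := z.2)))
  have := max_add_sub_one_le_measureReal_inter (μ := P) (s := X ⁻¹' Iio (-z.1))
    (hY (measurableSet_Iio (a := -z.2)))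
  have := measureReal_inter_le_min (μ := P) (s := X ⁻¹' Ioi z.1) (t := Y ⁻¹' Iio (-z.2))
  have := measureReal_inter_le_min (μ := P) (s := X ⁻¹' Iio (-z.1)) (t := Y ⁻¹' Ioi z.2)
  linarith

lemma layerMoment_eq_frechetLower_map [IsProbabilityMeasure P] (hX : Measurable X)
    (hY : Measurable Y) (hcom : Comonotone P X fun ω => -Y ω) (z : ℝ × ℝ) :
    layerMoment P X Y z = frechetLower (P.map X) (P.map Y) z := by
  have hsep := fun {C D : Set Ω} => measure_eq_zero_or_of_comonotone_neg hcom (C := C) (D := D)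
  rw [frechetLower_map hX hY, layerMoment_eq hX hY,
    measureReal_inter_eq_max (hX measurableSet_Ioi) (hY measurableSet_Ioi) (hsep ?_),
    measureReal_inter_eq_min (hX measurableSet_Ioi) (hY measurableSet_Iio) (hsep ?_),
    measureReal_inter_eq_min (hX measurableSet_Iio) (hY measurableSet_Ioi) (hsep ?_).symm,
    measureReal_inter_eq_max (hX measurableSet_Iio) (hY measurableSet_Iio) (hsep ?_).symm] <;>
  · intro ω hω ω' hω'
    simp only [mem_inter_iff, Set.mem_sdiff, mem_compl_iff, mem_preimage, mem_Ioi, mem_Iio,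
      not_lt] at hω hω'
    constructor <;> linarith

end LayerMomentBounds


open ProbabilityTheory

section Quantile

variable {ν : Measure ℝ}

lemma quantile_eq_quantileM_map {Ω : Type*} [MeasurableSpace Ω] {P : Measure Ω} {X : Ω → ℝ}
    (hX : Measurable X) : quantile P X = quantileM (P.map X) := by
  ext p
  simp only [quantileM, quantile]
  congr! 4 with z
  exact congrArg ENNReal.toReal (Measure.map_apply hX measurableSet_Iic).symm

lemma quantileM_eq_sInf_cdf [IsProbabilityMeasure ν] (p : ℝ) :
    quantileM ν p = sInf {z | p < cdf ν z} := by
  simp only [quantileM, quantile, cdf_eq_real, measureReal_def]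
  rfl

lemma bddBelow_setOf_lt_cdf {p : ℝ} (hp : 0 < p) : BddBelow {z | p < cdf ν z} := by
  obtain ⟨b, hb⟩ :=
    ((tendsto_cdf_atBot ν).eventually (eventually_lt_nhds hp)).exists_forall_of_atBot
  exact ⟨b, fun z hz => not_lt.1 fun hzb => (hb z hzb.le).not_gt hz⟩

lemma nonempty_setOf_lt_cdf {p : ℝ} (hp : p < 1) : {z | p < cdf ν z}.Nonempty :=
  ((tendsto_cdf_atTop ν).eventually (eventually_gt_nhds hp)).exists

lemma quantileM_lt_iff [IsProbabilityMeasure ν] {p : ℝ} (hp : p ∈ Ioo 0 1) (c : ℝ) :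
    quantileM ν p < c ↔ p < ν.real (Iio c) := by
  have hIio : ν.real (Iio c) = Function.leftLim (cdf ν) c := by
    have h := (cdf ν).measure_Iio (tendsto_cdf_atBot ν) c
    rw [measure_cdf, sub_zero] at h
    rw [measureReal_def, h, ENNReal.toReal_ofReal]
    exact (cdf_nonneg ν (c - 1)).trans ((monotone_cdf ν).le_leftLim (sub_one_lt c))
  rw [quantileM_eq_sInf_cdf, csInf_lt_iff (bddBelow_setOf_lt_cdf hp.1) (nonempty_setOf_lt_cdf hp.2),
    hIio]
  constructor
  · rintro ⟨z, hz, hzc⟩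
    exact hz.trans_le ((monotone_cdf ν).le_leftLim hzc)
  · intro h
    exact (((monotone_cdf ν).tendsto_leftLim c).eventually (eventually_gt_nhds h)).and
      self_mem_nhdsWithin |>.exists

lemma monotoneOn_quantileM [IsProbabilityMeasure ν] : MonotoneOn (quantileM ν) (Ioo 0 1) := by
  intro p hp q hq hpq
  simp only [quantileM_eq_sInf_cdf]
  exact csInf_le_csInf (bddBelow_setOf_lt_cdf hp.1) (nonempty_setOf_lt_cdf hq.2)
    fun z hz => hpq.trans_lt hz

lemma quantileM_of_nonpos_or_one_le [IsProbabilityMeasure ν] {p : ℝ} (hp : p < 0 ∨ 1 ≤ p) :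
    quantileM ν p = 0 := by
  rw [quantileM_eq_sInf_cdf]
  rcases hp with hp | hp
  · rw [show {z | p < cdf ν z} = univ from eq_univ_of_forall fun z => hp.trans_le (cdf_nonneg ν z)]
    exact Real.sInf_of_not_bddBelow not_bddBelow_univ
  · rw [show {z | p < cdf ν z} = ∅ from eq_empty_of_forall_notMem fun z hz =>
      (hz.trans_le (cdf_le_one ν z)).not_ge hp]
    exact Real.sInf_empty

lemma measurable_quantileM [IsProbabilityMeasure ν] : Measurable (quantileM ν) := by
  refine measurable_of_restrict_of_restrict_compl measurableSet_Ioo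
    (monotoneOn_iff_monotone.1 (monotoneOn_quantileM (ν := ν))).measurable ?_
  have hout : (Ioo 0 1)ᶜ.domRestrict (quantileM ν) =
      fun p : ((Ioo (0:ℝ) 1)ᶜ : Set ℝ) => if (p : ℝ) = 0 then quantileM ν 0 else 0 := by
    ext ⟨p, hp⟩
    simp only [domRestrict_apply]
    split_ifs with h0
    · rw [h0]
    · refine quantileM_of_nonpos_or_one_le ?_
      simp only [mem_compl_iff, mem_Ioo, not_and_or, not_lt] at hp
      rcases hp with hp | hp
      · exact Or.inl (lt_of_le_of_ne hp h0)
      · exact Or.inr hp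
  rw [hout]
  exact Measurable.ite ((measurableSet_singleton 0).preimage measurable_subtype_coe)
    measurable_const measurable_const

instance : IsProbabilityMeasure (volume.restrict (Ioo (0:ℝ) 1)) :=
  ⟨by rw [Measure.restrict_apply_univ, Real.volume_Ioo, sub_zero, ENNReal.ofReal_one]⟩

lemma map_quantileM_volume_Ioo [IsProbabilityMeasure ν] :
    (volume.restrict (Ioo 0 1)).map (quantileM ν) = ν := by
  refine ext_of_generate_finite _ (BorelSpace.measurable_eq.trans (borel_eq_generateFrom_Iio ℝ))
    isPiSystem_Iio ?_ (by simp [Measure.map_apply measurable_quantileM MeasurableSet.univ])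
  rintro _ ⟨c, rfl⟩
  have hpre : quantileM ν ⁻¹' Iio c ∩ Ioo 0 1 = Ioo 0 (ν.real (Iio c)) := by
    ext p
    simp only [mem_inter_iff, mem_preimage, mem_Iio, mem_Ioo]
    constructor
    · rintro ⟨h, hp⟩
      exact ⟨hp.1, (quantileM_lt_iff hp c).1 h⟩
    · rintro ⟨h0, h1⟩
      have hp : p ∈ Ioo (0:ℝ) 1 := ⟨h0, h1.trans_le measureReal_le_one⟩
      exact ⟨(quantileM_lt_iff hp c).2 h1, hp⟩
  rw [Measure.map_apply measurable_quantileM measurableSet_Iio,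
    Measure.restrict_apply' measurableSet_Ioo, hpre, Real.volume_Ioo, sub_zero, measureReal_def,
    ENNReal.ofReal_toReal (measure_ne_top _ _)]

lemma measurePreserving_one_sub_volume_Ioo :
    MeasurePreserving (fun p : ℝ => 1 - p) (volume.restrict (Ioo 0 1))
      (volume.restrict (Ioo 0 1)) := by
  have h := (Measure.measurePreserving_sub_left volume (1:ℝ)).restrict_preimage
    (measurableSet_Ioo (a := (0:ℝ)) (b := 1))
  have hpre : (fun p : ℝ => 1 - p) ⁻¹' Ioo 0 1 = Ioo 0 1 := by
    ext p
    simp only [mem_preimage, mem_Ioo]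
    constructor <;> rintro ⟨h0, h1⟩ <;> constructor <;> linarith
  rwa [hpre] at h

lemma map_quantileM_one_sub_volume_Ioo [IsProbabilityMeasure ν] :
    (volume.restrict (Ioo 0 1)).map (fun p => quantileM ν (1 - p)) = ν := by
  have h := measurePreserving_one_sub_volume_Ioo
  rw [← Function.comp_def, ← Measure.map_map measurable_quantileM h.measurable, h.map_eq,
    map_quantileM_volume_Ioo]

lemma antitoneOn_quantileM_one_sub [IsProbabilityMeasure ν] :
    AntitoneOn (fun p => quantileM ν (1 - p)) (Ioo 0 1) := by
  intro p hp q hq hpq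
  exact monotoneOn_quantileM ⟨by linarith [hq.2], by linarith [hq.1]⟩
    ⟨by linarith [hp.2], by linarith [hp.1]⟩ (by linarith)

end Quantile

/-- Hardy–Littlewood lower bound: `inf_{Y ~ μ} E[XY] = ∫_0^1 Q_X(p) Q_μ(1−p) dp`, the
infimum being attained by any `Y ~ μ` anti-comonotonic with `X`. -/
theorem hardy_littlewood_lower {Ω : Type*} [MeasurableSpace Ω] (P : Measure Ω)
    [IsProbabilityMeasure P] (X : Ω → ℝ) (hX : Measurable X)
    (μ : Measure ℝ) [IsProbabilityMeasure μ]
    (hI : IntegrableOn (fun p => quantile P X p * quantileM μ (1 - p)) (Set.Ioo 0 1) volume) :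
    (∀ Y : Ω → ℝ, Measurable Y → P.map Y = μ →
        Integrable (fun ω => X ω * Y ω) P →
        ∫ ω, X ω * Y ω ∂P ≥ ∫ p in Set.Ioo (0:ℝ) 1, quantile P X p * quantileM μ (1 - p)) ∧
    (∀ Y : Ω → ℝ, Measurable Y → P.map Y = μ → Comonotone P X (fun ω => - Y ω) →
        Integrable (fun ω => X ω * Y ω) P →
        ∫ ω, X ω * Y ω ∂P = ∫ p in Set.Ioo (0:ℝ) 1, quantile P X p * quantileM μ (1 - p)) := by
  have := Measure.isProbabilityMeasure_map (μ := P) hX.aemeasurable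
  have hQ : quantile P X = quantileM (P.map X) := quantile_eq_quantileM_map hX
  have hU : Measurable (quantile P X) := hQ ▸ measurable_quantileM
  have hV : Measurable fun p => quantileM μ (1 - p) :=
    measurable_quantileM.comp (measurable_const.sub measurable_id)
  have hanti : Comonotone (volume.restrict (Ioo 0 1)) (quantile P X)
      fun p => -quantileM μ (1 - p) :=
    hQ ▸ comonotone_restrict_of_monotoneOn measurableSet_Ioo monotoneOn_quantileM
      antitoneOn_quantileM_one_sub.neg
  have hUV : layerMoment (volume.restrict (Ioo 0 1)) (quantile P X)
      (fun p => quantileM μ (1 - p)) = frechetLower (P.map X) μ := funext fun z => by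
    rw [layerMoment_eq_frechetLower_map hU hV hanti, map_quantileM_one_sub_volume_Ioo, hQ,
      map_quantileM_volume_Ioo]
  have hRHS := integral_mul_eq_integral_layerMoment hU hV hI
  have hRHS_int := integrable_layerMoment hU hV hI
  rw [hUV] at hRHS hRHS_int
  refine ⟨fun Y hY hYμ hXY => ?_, fun Y hY hYμ hcom hXY => ?_⟩
  · rw [ge_iff_le, hRHS, integral_mul_eq_integral_layerMoment hX hY hXY, ← hYμ]
    exact integral_mono (hYμ ▸ hRHS_int) (integrable_layerMoment hX hY hXY)
      (frechetLower_map_le_layerMoment hX hY)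
  · rw [hRHS, integral_mul_eq_integral_layerMoment hX hY hXY, ← hYμ]
    exact integral_congr_ae (.of_forall (layerMoment_eq_frechetLower_map hX hY hcom))
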